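/- arXiv:1406.1849 — 4 statements merged into one kernel-verified Lean document; each statement's English description precedes it below -/
import Mathlib

section
/- Let 𝒜 be a finite set, 𝒢=(𝒱,ℰ) a countable locally finite undirected graph without self-loops or multiple edges, and X ⊆ 𝒜^𝒱 an n.n.constraint space. Then X is a topological Markov field. -/
open scoped Classical

namespace HC

variable {V : Type*} {A : Type*}

/-- The external vertex boundary of a set of vertices. -/
def boundary (G : SimpleGraph V) (F : Set V) : Set V :=
  {u | u ∉ F ∧ ∃ v ∈ F, G.Adj u v}

/-- The language of `X` on `F`: the set of patterns on `F` appearing in `X`. -/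
def lang (X : Set (V → A)) (F : Set V) : Set (F → A) :=
  F.restrict '' X

/-- The `n`-ball around `v` in the graph metric. -/
def ballSet (G : SimpleGraph V) (v : V) (n : ℕ) : Set V :=
  {u | ∃ p : G.Walk v u, p.length ≤ n}

/-- Asymptotic pairs: pairs of configurations in `X` differing at finitely many sites. -/
def Delta (X : Set (V → A)) : Set ((V → A) × (V → A)) :=
  {p | p.1 ∈ X ∧ p.2 ∈ X ∧ {v | p.1 v ≠ p.2 v}.Finite}

/-- Topological Markov field. -/
def IsTMF [TopologicalSpace A] (G : SimpleGraph V) (X : Set (V → A)) : Prop :=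
  IsClosed X ∧
    ∀ x ∈ X, ∀ y ∈ X, ∀ F : Set V, F.Finite →
      (∀ u ∈ boundary G F, x u = y u) →
      (fun v => if v ∈ F then x v else y v) ∈ X

/-- Nearest neighbour constraint space: the set of configurations avoiding a
set of forbidden patterns on finite cliques. -/
def IsNNConstraint (G : SimpleGraph V) (X : Set (V → A)) : Prop :=
  ∃ 𝓕 : ∀ F : Set V, Set (F → A),
    X = {x : V → A | ∀ F : Set V, F.Finite → G.IsClique F → F.restrict x ∉ 𝓕 F}

/-- `s` is a safe symbol for `X`. -/
def IsSafeSymbol (X : Set (V → A)) (s : A) : Prop :=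
  ∀ x ∈ X, ∀ S : Set V, (fun v => if v ∈ S then x v else s) ∈ X

/-- The pattern `(c at v, d at w)` belongs to the language of `X`. -/
def edgeB (X : Set (V → A)) (v w : V) (c d : A) : Prop :=
  ∃ x ∈ X, x v = c ∧ x w = d

/-- The single-site pattern `c at v` belongs to the language of `X`. -/
def siteB (X : Set (V → A)) (v : V) (c : A) : Prop :=
  ∃ x ∈ X, x v = c

/-- The pairs `(x,y)` and `(z,w)` are Markov-similar. -/
def MarkovSimilar (G : SimpleGraph V) (x y z w : V → A) : Prop :=
  ∃ S : Set V, S.Finite ∧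
    (∀ u, u ∉ S → x u = y u ∧ z u = w u) ∧
    (∀ u, u ∈ S ∪ boundary G S → x u = z u ∧ y u = w u)

/-- A Markov cocycle on `X` (realised as a real function on pairs of
configurations, vanishing off the asymptotic relation `Δ_X`). -/
def IsMarkovCocycle (G : SimpleGraph V) (X : Set (V → A))
    (M : (V → A) → (V → A) → ℝ) : Prop :=
  (∀ x y : V → A, (x, y) ∉ Delta X → M x y = 0) ∧
  (∀ x y z : V → A, (x, y) ∈ Delta X → (y, z) ∈ Delta X → M x z = M x y + M y z) ∧
  (∀ x y z w : V → A, (x, y) ∈ Delta X → (z, w) ∈ Delta X →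
    MarkovSimilar G x y z w → M x y = M z w)

/-- A nearest neighbour interaction: a real weight for each pattern,
vanishing on patterns whose domain is not a finite clique. -/
def IsNNInteraction (G : SimpleGraph V) (U : ∀ F : Set V, (F → A) → ℝ) : Prop :=
  ∀ F : Set V, ¬(F.Finite ∧ G.IsClique F) → ∀ p : F → A, U F p = 0

/-- `Σ_{F ⊆ V finite} (U(y|_F) - U(x|_F))`. -/
noncomputable def gibbsSum (U : ∀ F : Set V, (F → A) → ℝ) (x y : V → A) : ℝ :=
  ∑ᶠ F : Set V, (U F (F.restrict y) - U F (F.restrict x))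

/-- A Gibbs cocycle with some nearest neighbour interaction. -/
def IsGibbsCocycle (G : SimpleGraph V) (X : Set (V → A))
    (M : (V → A) → (V → A) → ℝ) : Prop :=
  (∀ x y : V → A, (x, y) ∉ Delta X → M x y = 0) ∧
  ∃ U : ∀ F : Set V, (F → A) → ℝ, IsNNInteraction G U ∧
    ∀ x y : V → A, (x, y) ∈ Delta X → M x y = gibbsSum U x y

/-- The space `𝐌_X` of Markov cocycles on `X`. -/
def markovSet (G : SimpleGraph V) (X : Set (V → A)) :
    Set ((V → A) → (V → A) → ℝ) :=
  {M | IsMarkovCocycle G X M}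

/-- The space `𝐆_X` of Gibbs cocycles with nearest neighbour interactions on `X`. -/
def gibbsSet (G : SimpleGraph V) (X : Set (V → A)) :
    Set ((V → A) → (V → A) → ℝ) :=
  {M | IsGibbsCocycle G X M}

/-- `X` is Hammersley-Clifford: `𝐌_X = 𝐆_X`. -/
def IsHammersleyClifford (G : SimpleGraph V) (X : Set (V → A)) : Prop :=
  markovSet G X = gibbsSet G X

/-- The action of a permutation of the vertices on configurations. -/
def confAct (g : Equiv.Perm V) (x : V → A) : V → A :=
  fun v => x (g⁻¹ v)

/-- `S` consists of automorphisms of the graph `G`. -/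
def PreservesAdj (G : SimpleGraph V) (S : Subgroup (Equiv.Perm V)) : Prop :=
  ∀ g ∈ S, ∀ u v : V, G.Adj (g u) (g v) ↔ G.Adj u v

/-- `X` is invariant under the subgroup `S`. -/
def InvariantSpace (S : Subgroup (Equiv.Perm V)) (X : Set (V → A)) : Prop :=
  ∀ g ∈ S, confAct g '' X = X

/-- The cocycle `M` is `S`-invariant. -/
def InvariantCocycle (S : Subgroup (Equiv.Perm V)) (M : (V → A) → (V → A) → ℝ) : Prop :=
  ∀ g ∈ S, ∀ x y : V → A, M (confAct g x) (confAct g y) = M x y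

/-- The interaction `U` is `S`-invariant: `U(ga) = U(a)` for every pattern `a`. -/
def InvariantInteraction (S : Subgroup (Equiv.Perm V))
    (U : ∀ F : Set V, (F → A) → ℝ) : Prop :=
  ∀ g ∈ S, ∀ F : Set V, ∀ x : V → A,
    U (⇑g '' F) ((⇑g '' F).restrict (confAct g x)) = U F (F.restrict x)

/-- The space `𝐌^G_X` of `S`-invariant Markov cocycles on `X`. -/
def markovSetInv (G : SimpleGraph V) (S : Subgroup (Equiv.Perm V)) (X : Set (V → A)) :
    Set ((V → A) → (V → A) → ℝ) :=
  {M | IsMarkovCocycle G X M ∧ InvariantCocycle S M}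

/-- The space `𝐆^G_X` of Gibbs cocycles with `S`-invariant nearest neighbour
interactions on `X`. -/
def gibbsSetInv (G : SimpleGraph V) (S : Subgroup (Equiv.Perm V)) (X : Set (V → A)) :
    Set ((V → A) → (V → A) → ℝ) :=
  {M | (∀ x y : V → A, (x, y) ∉ Delta X → M x y = 0) ∧
    ∃ U : ∀ F : Set V, (F → A) → ℝ, IsNNInteraction G U ∧ InvariantInteraction S U ∧
      ∀ x y : V → A, (x, y) ∈ Delta X → M x y = gibbsSum U x y}

/-- `X` is `G`-Hammersley-Clifford: `𝐌^G_X = 𝐆^G_X`. -/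
def IsGHammersleyClifford (G : SimpleGraph V) (S : Subgroup (Equiv.Perm V))
    (X : Set (V → A)) : Prop :=
  markovSetInv G S X = gibbsSetInv G S X

/-- The symbol `a` can be folded into the symbol `b` in `X`. -/
def FoldsInto (G : SimpleGraph V) (X : Set (V → A)) (a b : A) : Prop :=
  a ≠ b ∧
    ∀ v₁ v₂ v₃ : V, G.Adj v₁ v₂ → G.Adj v₂ v₃ → ∀ c : A,
      edgeB X v₁ v₂ a c →
        edgeB X v₁ v₂ b c ∧ edgeB X v₂ v₃ c b ∧
          ∃ x ∈ X, ∀ u ∈ boundary G (ballSet G v₁ 1), x u = b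

/-- `X ∩ (𝒜∖{a})^𝒱`. -/
def foldSpace (X : Set (V → A)) (a : A) : Set (V → A) :=
  X ∩ {x | ∀ v, x v ≠ a}

/-- `Y` is a fold of `X` (and `X` an unfold of `Y`). -/
def IsFoldOf (G : SimpleGraph V) (Y X : Set (V → A)) : Prop :=
  ∃ a b : A, FoldsInto G X a b ∧ Y = foldSpace X a

/-- `P₁, P₂` are the partite classes of a bipartition of `G`. -/
def IsBipartition (G : SimpleGraph V) (P₁ P₂ : Set V) : Prop :=
  (∀ v : V, v ∈ P₁ ∨ v ∈ P₂) ∧ Disjoint P₁ P₂ ∧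
    ∀ u v : V, G.Adj u v → (u ∈ P₁ ∧ v ∈ P₂) ∨ (u ∈ P₂ ∧ v ∈ P₁)

/-- `G` is bipartite. -/
def Bipartite (G : SimpleGraph V) : Prop :=
  ∃ P₁ P₂ : Set V, IsBipartition G P₁ P₂

/-- `θ^v_c(x)`: change the value of `x` at `v` to `c`. -/
noncomputable def theta (x : V → A) (v : V) (c : A) : V → A :=
  fun u => if u = v then c else x u

/-- `θ^{w₁,…,w_r}_{c₁,…,c_r}(x)`: change the value of `x` at each `w i` to `c i`. -/
noncomputable def multiUpdate (x : V → A) {r : ℕ} (w : Fin r → V) (c : Fin r → A) :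
    V → A :=
  fun u => if h : ∃ i, w i = u then c h.choose else x u

/-- Restriction of a cocycle to the asymptotic pairs of a subspace `Y`. -/
noncomputable def restrictCocycle (Y : Set (V → A)) (M : (V → A) → (V → A) → ℝ) :
    (V → A) → (V → A) → ℝ :=
  fun x y => if (x, y) ∈ Delta Y then M x y else 0

/-- The pair `(x,y)` is `U`-good for the cocycle `M`. -/
def VGood (M : (V → A) → (V → A) → ℝ) (U : ∀ F : Set V, (F → A) → ℝ)
    (x y : V → A) : Prop :=
  M x y = gibbsSum U x y

/-- `𝒱₁`: vertices `v` admitting a neighbour `w` with `(a,a) ∈ ℬ_{v,w}(X)`. -/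
def Vone (G : SimpleGraph V) (X : Set (V → A)) (a : A) : Set V :=
  {v | ∃ w, G.Adj v w ∧ edgeB X v w a a}

/-- `𝒱₂`: vertices not in `𝒱₁` where the symbol `a` can appear. -/
def Vtwo (G : SimpleGraph V) (X : Set (V → A)) (a : A) : Set V :=
  {v | v ∉ Vone G X a ∧ siteB X v a}

/-- The space of graph homomorphisms from `G` to `H`, as a configuration space. -/
def homSpace {B : Type*} (G : SimpleGraph V) (H : SimpleGraph B) : Set (V → B) :=
  {x | ∀ v w : V, G.Adj v w → H.Adj (x v) (x w)}

/-! Forbidding a pattern on a finite set is a clopen condition, so `X` is closed. For the Markov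
property, a clique meeting `F` lies in `F ∪ ∂F`, where the glued configuration agrees with `x`;
a clique missing `F` sees only `y`. -/

theorem isClosed_setOf_forall_restrict_notMem [TopologicalSpace A] [DiscreteTopology A]
    (P : Set V → Prop) (𝓕 : ∀ F : Set V, Set (F → A)) :
    IsClosed {x : V → A | ∀ F : Set V, F.Finite → P F → F.restrict x ∉ 𝓕 F} := by
  simp only [Set.ofPred_forall]
  refine isClosed_iInter fun F => isClosed_iInter fun hF => isClosed_iInter fun _ => ?_
  have := hF.to_subtype
  exact (isClosed_discrete (𝓕 F)ᶜ).preimage (Pi.continuous_domRestrict (A := fun _ => A) F)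

theorem restrict_ite_eq_or_of_isClique {G : SimpleGraph V} {F C : Set V} {x y : V → A}
    (hC : G.IsClique C) (hxy : ∀ u ∈ boundary G F, x u = y u) :
    C.restrict (fun v => if v ∈ F then x v else y v) = C.restrict x ∨
      C.restrict (fun v => if v ∈ F then x v else y v) = C.restrict y := by
  by_cases hCF : ∃ v ∈ C, v ∈ F
  · obtain ⟨v, hvC, hvF⟩ := hCF
    left
    funext ⟨u, huC⟩
    show (if u ∈ F then x u else y u) = x u
    by_cases huF : u ∈ F
    · exact if_pos huF
    · have huv : G.Adj u v := hC huC hvC fun huv => huF (huv ▸ hvF)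
      exact (if_neg huF).trans (hxy u ⟨huF, v, hvF, huv⟩).symm
  · right
    funext ⟨u, huC⟩
    exact if_neg fun huF => hCF ⟨u, huC, huF⟩

theorem statement1_general [TopologicalSpace A] [DiscreteTopology A]
    (G : SimpleGraph V)
    (X : Set (V → A)) (hX : IsNNConstraint G X) :
    IsTMF G X := by
  obtain ⟨𝓕, rfl⟩ := hX
  refine ⟨isClosed_setOf_forall_restrict_notMem _ 𝓕, fun x hx y hy F _ hxy C hCfin hC => ?_⟩
  rcases restrict_ite_eq_or_of_isClique hC hxy with h | h <;> rw [h]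
  exacts [hx C hCfin hC, hy C hCfin hC]

/-- Every n.n.constraint space is a topological Markov field. -/
theorem statement1 [Countable V] [Fintype A] [TopologicalSpace A] [DiscreteTopology A]
    (G : SimpleGraph V) (hlf : ∀ v : V, (G.neighborSet v).Finite)
    (X : Set (V → A)) (hX : IsNNConstraint G X) :
    IsTMF G X :=
  statement1_general G X hX

end HC
end

section
/- (Strong Hammersley-Clifford theorem, part 1.) Let X ⊆ 𝒜^𝒱 be a topological Markov field with a safe symbol. Then every Markov cocycle on X is a Gibbs cocycle with some nearest neighbour interaction, i.e. 𝐌_X = 𝐆_X. -/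
open scoped Classical

namespace HC

variable {V : Type*} {A : Type*}

/-!
Fix the all-`s` configuration `⋆`. For `z ∈ X` and a finite set `E`, the safe symbol puts the
configuration `z_E` (equal to `z` on `E`, to `s` elsewhere) in `X`, so `φ_z(E) = M(⋆, z_E)` is
defined, and the interaction is its Möbius transform `U(z|_F) = Σ_{E ⊆ F} (-1)^{|F \ E|} φ_z(E)`.
Möbius inversion gives `Σ_{F ⊆ D} U(z|_F) = φ_z(D)`, hence `M(x, y) = M(x_D, y_D)` is the Gibbs sum
as soon as `D` contains the set where `x ≠ y` together with its boundary. If `u, v ∈ F` are not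
adjacent, the Markov property makes changing `u` independent of the value at `v`, so the
second difference of `φ_z` in `u, v` vanishes and `U(z|_F) = 0`: the interaction is nearest
neighbour. Conversely, only cliques meeting the set `D` of differences contribute to a nearest
neighbour Gibbs sum; they lie in the finite set `D ∪ ∂D`, which makes the sum finite (hence a
cocycle) and unchanged under Markov similarity.
-/

section Mobius

variable {α R : Type*} [CommRing R]

def mobiusTransform (φ : Finset α → R) (F : Finset α) : R :=
  ∑ E ∈ F.powerset, (-1) ^ (F.card + E.card) * φ E

lemma mobiusTransform_congr {φ ψ : Finset α → R} {F : Finset α} (h : ∀ E ⊆ F, φ E = ψ E) :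
    mobiusTransform φ F = mobiusTransform ψ F :=
  Finset.sum_congr rfl fun E hE => by rw [h E (Finset.mem_powerset.1 hE)]

variable [DecidableEq α]

lemma mobiusTransform_insert (φ : Finset α → R) {F : Finset α} {a : α} (ha : a ∉ F) :
    mobiusTransform φ (insert a F) = mobiusTransform (fun E => φ (insert a E) - φ E) F := by
  rw [mobiusTransform, Finset.sum_powerset_insert ha, Finset.card_insert_of_notMem ha,
    mobiusTransform, ← Finset.sum_add_distrib]
  refine Finset.sum_congr rfl fun E hE => ?_
  rw [Finset.card_insert_of_notMem fun h => ha (Finset.mem_powerset.1 hE h)]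
  ring

lemma sum_mobiusTransform_powerset (φ : Finset α → R) (D : Finset α) :
    ∑ F ∈ D.powerset, mobiusTransform φ F = φ D := by
  induction D using Finset.induction_on generalizing φ with
  | empty => simp [mobiusTransform]
  | insert a D ha ih =>
    rw [Finset.sum_powerset_insert ha, ih,
      Finset.sum_congr rfl fun F hF =>
        mobiusTransform_insert φ fun h => ha (Finset.mem_powerset.1 hF h), ih]
    ring

lemma mobiusTransform_insert_insert_eq_zero {φ : Finset α → R} {F : Finset α} {u v : α}
    (huv : u ≠ v) (hu : u ∉ F) (hv : v ∉ F)
    (h : ∀ E ⊆ F, φ (insert u (insert v E)) - φ (insert v E) = φ (insert u E) - φ E) :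
    mobiusTransform φ (insert u (insert v F)) = 0 := by
  rw [mobiusTransform_insert φ (by simp [huv, hu]), mobiusTransform_insert _ hv,
    mobiusTransform_congr (ψ := fun _ => 0) fun E hE => sub_eq_zero.2 (h E hE)]
  simp [mobiusTransform]

end Mobius

section Graph

variable {G : SimpleGraph V}

lemma finite_union_boundary (hlf : ∀ v : V, (G.neighborSet v).Finite) {S : Set V}
    (hS : S.Finite) : (S ∪ boundary G S).Finite := by
  refine hS.union ((hS.biUnion fun v _ => hlf v).subset ?_)
  rintro u ⟨-, v, hvS, hadj⟩
  exact Set.mem_biUnion hvS hadj.symm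

lemma subset_union_boundary_of_isClique {F S : Set V} (hF : G.IsClique F) {v : V}
    (hvF : v ∈ F) (hvS : v ∈ S) : F ⊆ S ∪ boundary G S := by
  intro u hu
  by_cases huS : u ∈ S
  · exact Or.inl huS
  · exact Or.inr ⟨huS, v, hvS, hF hu hvF fun huv => huS (huv ▸ hvS)⟩

end Graph

section Delta

variable {X : Set (V → A)} {x y z : V → A}

lemma mem_Delta_symm (h : (x, y) ∈ Delta X) : (y, x) ∈ Delta X :=
  ⟨h.2.1, h.1, by simpa only [ne_comm] using h.2.2⟩

lemma mem_Delta_trans (hxy : (x, y) ∈ Delta X) (hyz : (y, z) ∈ Delta X) :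
    (x, z) ∈ Delta X := by
  refine ⟨hxy.1, hyz.2.1, (hxy.2.2.union hyz.2.2).subset fun v hv => ?_⟩
  by_contra h
  simp only [Set.mem_union, Set.mem_ofPred_eq, not_or, not_not] at h
  exact hv (h.1.trans h.2)

lemma IsMarkovCocycle.eq_sub {G : SimpleGraph V} {M : (V → A) → (V → A) → ℝ}
    (hM : IsMarkovCocycle G X M) (hx : (z, x) ∈ Delta X) (hy : (z, y) ∈ Delta X) :
    M x y = M z y - M z x := by
  rw [hM.2.1 z x y hx (mem_Delta_trans (mem_Delta_symm hx) hy)]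
  ring

end Delta

section Gibbs

variable {G : SimpleGraph V} {U : ∀ F : Set V, (F → A) → ℝ}

lemma support_gibbsTerm_subset (hU : IsNNInteraction G U) (x y : V → A) :
    Function.support (fun F : Set V => U F (F.restrict y) - U F (F.restrict x)) ⊆
      {F | F ⊆ {v | x v ≠ y v} ∪ boundary G {v | x v ≠ y v}} := by
  intro F hF
  rw [Function.mem_support] at hF
  by_cases hcl : F.Finite ∧ G.IsClique F
  · by_cases hxy : ∃ v ∈ F, x v ≠ y v
    · obtain ⟨v, hvF, hv⟩ := hxy
      exact subset_union_boundary_of_isClique hcl.2 hvF hv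
    · push Not at hxy
      have : F.restrict x = F.restrict y := funext fun v => hxy v v.2
      exact absurd (by rw [this, sub_self]) hF
  · exact absurd (by rw [hU F hcl, hU F hcl, sub_self]) hF

lemma gibbsSum_eq_sum_powerset (hU : IsNNInteraction G U) {x y : V → A} {C : Finset V}
    (hC : {v | x v ≠ y v} ∪ boundary G {v | x v ≠ y v} ⊆ C) :
    gibbsSum U x y = ∑ F ∈ C.powerset,
      (U F ((F : Set V).restrict y) - U F ((F : Set V).restrict x)) := by
  rw [gibbsSum, finsum_eq_sum_of_support_subset _ (s := C.powerset.map Finset.coeEmb.toEmbedding),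
    Finset.sum_map]
  · rfl
  intro F hF
  have hFC : F ⊆ C := (support_gibbsTerm_subset hU x y hF).trans hC
  obtain ⟨F', rfl⟩ := ((C.finite_toSet).subset hFC).exists_finset_coe
  simpa using hFC

lemma gibbsSum_add (hlf : ∀ v : V, (G.neighborSet v).Finite) (hU : IsNNInteraction G U)
    {x y z : V → A} (hxy : {v | x v ≠ y v}.Finite) (hyz : {v | y v ≠ z v}.Finite) :
    gibbsSum U x y + gibbsSum U y z = gibbsSum U x z := by
  have hfin : ∀ {a b : V → A}, {v | a v ≠ b v}.Finite →
      (Function.support fun F : Set V => U F (F.restrict b) - U F (F.restrict a)).Finite :=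
    fun hab => (finite_union_boundary hlf hab).finite_subsets.subset
      (support_gibbsTerm_subset hU _ _)
  rw [gibbsSum, gibbsSum, gibbsSum, ← finsum_add_distrib (hfin hxy) (hfin hyz)]
  exact finsum_congr fun F => by ring

lemma gibbsSum_eq_of_markovSimilar (hU : IsNNInteraction G U) {x y z w : V → A}
    (h : MarkovSimilar G x y z w) : gibbsSum U x y = gibbsSum U z w := by
  obtain ⟨S, -, hout, hin⟩ := h
  refine finsum_congr fun F => ?_
  by_cases hcl : F.Finite ∧ G.IsClique F
  · by_cases hFS : ∃ v ∈ F, v ∈ S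
    · obtain ⟨v, hvF, hvS⟩ := hFS
      have hF := subset_union_boundary_of_isClique hcl.2 hvF hvS
      rw [show F.restrict x = F.restrict z from funext fun u => (hin u (hF u.2)).1,
        show F.restrict y = F.restrict w from funext fun u => (hin u (hF u.2)).2]
    · push Not at hFS
      rw [show F.restrict x = F.restrict y from funext fun u => (hout u (hFS u u.2)).1,
        show F.restrict z = F.restrict w from funext fun u => (hout u (hFS u u.2)).2,
        sub_self, sub_self]
  · rw [hU F hcl, hU F hcl, hU F hcl, hU F hcl]

theorem IsGibbsCocycle.isMarkovCocycle (hlf : ∀ v : V, (G.neighborSet v).Finite)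
    {X : Set (V → A)} {M : (V → A) → (V → A) → ℝ} (hM : IsGibbsCocycle G X M) :
    IsMarkovCocycle G X M := by
  obtain ⟨hzero, U, hU, hgibbs⟩ := hM
  refine ⟨hzero, fun x y z hxy hyz => ?_, fun x y z w hxy hzw hsim => ?_⟩
  · rw [hgibbs x y hxy, hgibbs y z hyz, hgibbs x z (mem_Delta_trans hxy hyz)]
    exact (gibbsSum_add hlf hU hxy.2.2 hyz.2.2).symm
  · rw [hgibbs x y hxy, hgibbs z w hzw]
    exact gibbsSum_eq_of_markovSimilar hU hsim

end Gibbs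

section SafeSymbol

variable {X : Set (V → A)} {s : A}

noncomputable def patch (s : A) (z : V → A) (E : Finset V) : V → A :=
  fun v => if v ∈ E then z v else s

lemma patch_insert_of_ne (s : A) (z : V → A) (E : Finset V) {u t : V} (h : t ≠ u) :
    patch s z (insert u E) t = patch s z E t := by
  simp [patch, h]

lemma patch_mem (hs : IsSafeSymbol X s) {z : V → A} (hz : z ∈ X) (E : Finset V) :
    patch s z E ∈ X := by
  unfold patch
  convert hs z hz E using 3
  exact Finset.mem_coe.symm

lemma const_patch_mem_Delta (hs : IsSafeSymbol X s) {z : V → A} (hz : z ∈ X)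
    (E : Finset V) : ((fun _ => s), patch s z E) ∈ Delta X := by
  refine ⟨by simpa using hs z hz ∅, patch_mem hs hz E,
    E.finite_toSet.subset fun v hv => Finset.mem_coe.2 (by_contra fun hvE => hv ?_)⟩
  simp [patch, hvE]

lemma patch_mem_Delta (hs : IsSafeSymbol X s) {y z : V → A} (hy : y ∈ X) (hz : z ∈ X)
    (D E : Finset V) : (patch s y D, patch s z E) ∈ Delta X :=
  mem_Delta_trans (mem_Delta_symm (const_patch_mem_Delta hs hy D)) (const_patch_mem_Delta hs hz E)

variable {G : SimpleGraph V} {M : (V → A) → (V → A) → ℝ}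

noncomputable def starEnergy (M : (V → A) → (V → A) → ℝ) (s : A) (z : V → A) (E : Finset V) : ℝ :=
  M (fun _ => s) (patch s z E)

lemma starEnergy_congr {z₁ z₂ : V → A} {E : Finset V} (h : ∀ v ∈ E, z₁ v = z₂ v) :
    starEnergy M s z₁ E = starEnergy M s z₂ E := by
  unfold starEnergy patch
  congr 1
  funext v
  split_ifs with hv
  exacts [h v hv, rfl]

lemma starEnergy_second_difference (hM : IsMarkovCocycle G X M) (hs : IsSafeSymbol X s)
    {z : V → A} (hz : z ∈ X) {u v : V} (huv : u ≠ v) (hadj : ¬ G.Adj u v) (E : Finset V) :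
    starEnergy M s z (insert u (insert v E)) - starEnergy M s z (insert v E)
      = starEnergy M s z (insert u E) - starEnergy M s z E := by
  have hsim : MarkovSimilar G (patch s z E) (patch s z (insert u E))
      (patch s z (insert v E)) (patch s z (insert u (insert v E))) := by
    refine ⟨{u}, Set.finite_singleton u, fun t ht => ?_, fun t ht => ?_⟩
    · exact ⟨(patch_insert_of_ne s z E ht).symm, (patch_insert_of_ne s z _ ht).symm⟩
    · have htv : t ≠ v := by
        rintro rfl
        rcases ht with ht | ⟨-, w, hw, htw⟩
        · exact huv (Set.mem_singleton_iff.1 ht).symm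
        · exact hadj ((Set.mem_singleton_iff.1 hw) ▸ htw.symm)
      rw [Finset.insert_comm]
      exact ⟨(patch_insert_of_ne s z E htv).symm, (patch_insert_of_ne s z _ htv).symm⟩
  have h := hM.2.2 _ _ _ _ (patch_mem_Delta hs hz hz _ _) (patch_mem_Delta hs hz hz _ _) hsim
  rw [hM.eq_sub (const_patch_mem_Delta hs hz _) (const_patch_mem_Delta hs hz _),
    hM.eq_sub (const_patch_mem_Delta hs hz _) (const_patch_mem_Delta hs hz _)] at h
  simp only [starEnergy]
  linarith

lemma mobiusTransform_starEnergy_eq_zero (hM : IsMarkovCocycle G X M) (hs : IsSafeSymbol X s)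
    {z : V → A} (hz : z ∈ X) {F : Finset V} (hF : ¬ G.IsClique (F : Set V)) :
    mobiusTransform (starEnergy M s z) F = 0 := by
  obtain ⟨u, hu, v, hv, huv, hadj⟩ : ∃ u ∈ F, ∃ v ∈ F, u ≠ v ∧ ¬ G.Adj u v := by
    simpa [SimpleGraph.isClique_iff, Set.Pairwise] using hF
  have hF : F = insert u (insert v ((F.erase u).erase v)) := by
    rw [Finset.insert_erase (Finset.mem_erase.2 ⟨huv.symm, hv⟩), Finset.insert_erase hu]
  rw [hF]
  exact mobiusTransform_insert_insert_eq_zero huv (by simp) (by simp)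
    fun E _ => starEnergy_second_difference hM hs hz huv hadj E

noncomputable def interactionOf (G : SimpleGraph V) (M : (V → A) → (V → A) → ℝ) (s : A) :
    ∀ F : Set V, (F → A) → ℝ := fun F p =>
  if h : F.Finite ∧ G.IsClique F then
    mobiusTransform (starEnergy M s fun v => if hv : v ∈ F then p ⟨v, hv⟩ else s) h.1.toFinset
  else 0

lemma isNNInteraction_interactionOf (G : SimpleGraph V) (M : (V → A) → (V → A) → ℝ) (s : A) :
    IsNNInteraction G (interactionOf G M s) :=
  fun _ h _ => dif_neg h

lemma interactionOf_coe (hM : IsMarkovCocycle G X M) (hs : IsSafeSymbol X s)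
    {z : V → A} (hz : z ∈ X) (F : Finset V) :
    interactionOf G M s F ((F : Set V).restrict z) = mobiusTransform (starEnergy M s z) F := by
  by_cases hF : G.IsClique (F : Set V)
  · rw [interactionOf, dif_pos ⟨F.finite_toSet, hF⟩, Finset.finite_toSet_toFinset]
    exact mobiusTransform_congr fun E hE => starEnergy_congr fun v hv => dif_pos (hE hv)
  · rw [mobiusTransform_starEnergy_eq_zero hM hs hz hF]
    exact isNNInteraction_interactionOf G M s _ (fun h => hF h.2) _

lemma sum_interactionOf_powerset (hM : IsMarkovCocycle G X M) (hs : IsSafeSymbol X s)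
    {z : V → A} (hz : z ∈ X) (D : Finset V) :
    ∑ F ∈ D.powerset, interactionOf G M s F ((F : Set V).restrict z) =
      M (fun _ => s) (patch s z D) := by
  simp only [interactionOf_coe hM hs hz]
  exact sum_mobiusTransform_powerset _ D

theorem IsMarkovCocycle.isGibbsCocycle (hlf : ∀ v : V, (G.neighborSet v).Finite)
    (hs : IsSafeSymbol X s) (hM : IsMarkovCocycle G X M) : IsGibbsCocycle G X M := by
  refine ⟨hM.1, interactionOf G M s, isNNInteraction_interactionOf G M s, fun x y hxy => ?_⟩
  obtain ⟨hx, hy, hd⟩ := hxy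
  set D := (finite_union_boundary hlf hd).toFinset
  have hsim : MarkovSimilar G x y (patch s x D) (patch s y D) := by
    refine ⟨{v | x v ≠ y v}, hd, fun u hu => ?_, fun u hu => ?_⟩
    · have hxy : x u = y u := not_not.1 hu
      exact ⟨hxy, by simp [patch, hxy]⟩
    · have huD : u ∈ D := by simpa [D] using hu
      simp [patch, huD]
  calc M x y = M (patch s x D) (patch s y D) :=
        hM.2.2 _ _ _ _ ⟨hx, hy, hd⟩ (patch_mem_Delta hs hx hy D D) hsim
    _ = M (fun _ => s) (patch s y D) - M (fun _ => s) (patch s x D) :=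
        hM.eq_sub (const_patch_mem_Delta hs hx D) (const_patch_mem_Delta hs hy D)
    _ = ∑ F ∈ D.powerset, (interactionOf G M s F ((F : Set V).restrict y) -
          interactionOf G M s F ((F : Set V).restrict x)) := by
        rw [Finset.sum_sub_distrib, sum_interactionOf_powerset hM hs hx,
          sum_interactionOf_powerset hM hs hy]
    _ = gibbsSum (interactionOf G M s) x y :=
        (gibbsSum_eq_sum_powerset (isNNInteraction_interactionOf G M s) (by simp [D])).symm

end SafeSymbol

theorem statement4_general (G : SimpleGraph V) (hlf : ∀ v : V, (G.neighborSet v).Finite)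
    (X : Set (V → A)) (s : A) (hs : IsSafeSymbol X s) :
    markovSet G X = gibbsSet G X :=
  Set.ext fun _ => ⟨IsMarkovCocycle.isGibbsCocycle hlf hs, IsGibbsCocycle.isMarkovCocycle hlf⟩

/-- strong Hammersley-Clifford theorem, part 1. On a topological
Markov field with a safe symbol, every Markov cocycle is a Gibbs cocycle with a
nearest neighbour interaction: `𝐌_X = 𝐆_X`. -/
theorem statement4 [Countable V] [Fintype A] [TopologicalSpace A] [DiscreteTopology A]
    (G : SimpleGraph V) (hlf : ∀ v : V, (G.neighborSet v).Finite)
    (X : Set (V → A)) (hX : IsTMF G X) (s : A) (hs : IsSafeSymbol X s) :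
    markovSet G X = gibbsSet G X :=
  statement4_general G hlf X s hs

end HC
end

section
/- Let X be an n.n.constraint space, M a Markov cocycle and V a nearest neighbour interaction on X. Suppose (x,y) ∈ Δ_X and there is a finite chain x = x₁, x₂, …, x_n = y in X such that each (x_i, x_{i+1}) ∈ Δ_X and each (x_i, x_{i+1}) is Markov-similar to some V-good pair. Then (x,y) is V-good. -/
open scoped Classical

namespace HC

variable {V : Type*} {A : Type*}

/-! Both `M` and `gibbsSum U` are additive along asymptotic pairs and take equal values on
Markov-similar pairs: for the Gibbs sum, a clique meeting the changed set `S` lies in `S ∪ ∂S`,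
where the two pairs agree, and a clique missing `S` contributes nothing to either pair.
So `V`-goodness passes from each good pair to the Markov-similar step of the chain, and then
along the chain by additivity. -/

lemma Delta_trans {X : Set (V → A)} {x y z : V → A}
    (hxy : (x, y) ∈ Delta X) (hyz : (y, z) ∈ Delta X) : (x, z) ∈ Delta X :=
  ⟨hxy.1, hyz.2.1, (hxy.2.2.union hyz.2.2).subset fun v (hv : x v ≠ z v) =>
    (ne_or_eq (x v) (y v)).imp id fun (h : x v = y v) =>
      (show y v ≠ z v from h ▸ hv)⟩

lemma IsMarkovCocycle.apply_self {G : SimpleGraph V} {X : Set (V → A)}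
    {M : (V → A) → (V → A) → ℝ} (hM : IsMarkovCocycle G X M) (x : V → A) :
    M x x = 0 := by
  by_cases hx : (x, x) ∈ Delta X
  · linarith [hM.2.1 x x x hx hx]
  · exact hM.1 x x hx

section gibbsSum

variable {G : SimpleGraph V} {U : ∀ F : Set V, (F → A) → ℝ}

/-- A contributing clique contains a changed vertex `v`, hence lies in
`insert v (G.neighborSet v)`. -/
lemma gibbsSum_support_finite (hlf : ∀ v : V, (G.neighborSet v).Finite)
    (hU : IsNNInteraction G U) {x y : V → A} (hd : {v | x v ≠ y v}.Finite) :
    (Function.support fun F : Set V => U F (F.restrict y) - U F (F.restrict x)).Finite := by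
  refine (hd.biUnion fun v _ => ((hlf v).insert v).finite_subsets).subset fun F hF => ?_
  rw [Function.mem_support, sub_ne_zero] at hF
  by_cases hc : F.Finite ∧ G.IsClique F
  · obtain ⟨v, hvF, hv⟩ : ∃ v ∈ F, x v ≠ y v := by
      by_contra! h
      exact hF (congrArg (U F) (Set.domRestrict_eq_domRestrict_iff.2 h).symm)
    refine Set.mem_biUnion (show v ∈ {v | x v ≠ y v} from hv) fun u huF => ?_
    rcases eq_or_ne u v with rfl | huv
    · exact Set.mem_insert u _
    · exact Set.mem_insert_of_mem v (hc.2 hvF huF huv.symm)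
  · exact absurd (by rw [hU F hc, hU F hc]) hF

end gibbsSum

section VGood

variable {G : SimpleGraph V} {X : Set (V → A)} {M : (V → A) → (V → A) → ℝ}
  {U : ∀ F : Set V, (F → A) → ℝ}

lemma VGood.refl (hM : IsMarkovCocycle G X M) (x : V → A) : VGood M U x x := by
  rw [VGood, hM.apply_self, gibbsSum, finsum_eq_zero_of_forall_eq_zero fun F => sub_self _]

lemma VGood.trans (hlf : ∀ v : V, (G.neighborSet v).Finite) (hM : IsMarkovCocycle G X M)
    (hU : IsNNInteraction G U) {x y z : V → A} (hxy : (x, y) ∈ Delta X)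
    (hyz : (y, z) ∈ Delta X) (hxy' : VGood M U x y) (hyz' : VGood M U y z) :
    VGood M U x z := by
  rw [VGood, hM.2.1 x y z hxy hyz, hxy', hyz', gibbsSum_add hlf hU hxy.2.2 hyz.2.2]

lemma VGood.of_markovSimilar (hM : IsMarkovCocycle G X M) (hU : IsNNInteraction G U)
    {x y z w : V → A} (hxy : (x, y) ∈ Delta X) (hzw : (z, w) ∈ Delta X)
    (h : MarkovSimilar G x y z w) (hgood : VGood M U z w) : VGood M U x y := by
  rw [VGood, hM.2.2 x y z w hxy hzw h, hgood, gibbsSum_eq_of_markovSimilar hU h]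

end VGood

theorem statement7_general (G : SimpleGraph V) (hlf : ∀ v : V, (G.neighborSet v).Finite)
    (X : Set (V → A))
    (M : (V → A) → (V → A) → ℝ) (hM : IsMarkovCocycle G X M)
    (U : ∀ F : Set V, (F → A) → ℝ) (hU : IsNNInteraction G U)
    (x y : V → A)
    (n : ℕ) (ch : Fin (n + 1) → V → A) (h0 : ch 0 = x) (hn : ch (Fin.last n) = y)
    (hstep : ∀ i : Fin n, (ch i.castSucc, ch i.succ) ∈ Delta X ∧
      ∃ z w : V → A, (z, w) ∈ Delta X ∧
        MarkovSimilar G (ch i.castSucc) (ch i.succ) z w ∧ VGood M U z w) :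
    VGood M U x y := by
  let R : (V → A) → (V → A) → Prop := fun p q => (p, q) ∈ Delta X ∧ VGood M U p q
  have : IsTrans (V → A) R := ⟨fun _ _ _ hpq hqr =>
    ⟨Delta_trans hpq.1 hqr.1, hpq.2.trans hlf hM hU hpq.1 hqr.1 hqr.2⟩⟩
  have hchain : ∀ i, Relation.ReflTransGen R (ch 0) (ch i) :=
    Fin.induction .refl fun i ih => ih.tail <| by
      obtain ⟨hi, z, w, hzw, hsim, hgood⟩ := hstep i
      exact ⟨hi, .of_markovSimilar hM hU hi hzw hsim hgood⟩
  rcases Relation.reflTransGen_iff_eq_or_transGen.1 (h0 ▸ hn ▸ hchain (Fin.last n))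
    with hyx | hR
  · exact hyx ▸ .refl hM y
  · exact (Relation.transGen_eq_self (r := R) ▸ hR).2

/-- If an asymptotic pair `(x,y)` is connected by a finite chain each
of whose steps is Markov-similar to a `V`-good pair, then `(x,y)` is `V`-good. -/
theorem statement7 [Countable V] [Fintype A]
    (G : SimpleGraph V) (hlf : ∀ v : V, (G.neighborSet v).Finite)
    (X : Set (V → A)) (hX : IsNNConstraint G X)
    (M : (V → A) → (V → A) → ℝ) (hM : IsMarkovCocycle G X M)
    (U : ∀ F : Set V, (F → A) → ℝ) (hU : IsNNInteraction G U)
    (x y : V → A) (hxy : (x, y) ∈ Delta X)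
    (n : ℕ) (ch : Fin (n + 1) → V → A) (h0 : ch 0 = x) (hn : ch (Fin.last n) = y)
    (hstep : ∀ i : Fin n, (ch i.castSucc, ch i.succ) ∈ Delta X ∧
      ∃ z w : V → A, (z, w) ∈ Delta X ∧
        MarkovSimilar G (ch i.castSucc) (ch i.succ) z w ∧ VGood M U z w) :
    VGood M U x y :=
  statement7_general G hlf X M hM U hU x y n ch h0 hn hstep

end HC
end

section
/- Let 𝒢 be a bipartite countable locally finite graph and G ⊆ Aut(𝒢) a subgroup. Suppose X ⊆ 𝒜^𝒱 is a G-invariant n.n.constraint space and X_a is a fold of X. Then the linear map F : 𝐌^G_X → 𝐌^G_{X_a} given by F(M) = M|_{Δ_{X_a}} is well-defined and surjective, and F(𝐆^G_X) = 𝐆^G_{X_a}. -/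
/-!
Folding `a` into `b` is realised by a retraction `φ` of `X` onto `X_a` acting site by site: at a
vertex with a neighbour `a` becomes `b`, at an isolated vertex it becomes some other symbol
occurring there. Since `𝒢` is bipartite its cliques are vertices and edges, so `φ x ∈ X` can be
checked edge by edge, and the fold conditions say precisely that replacing `a` by `b` keeps edge
patterns admissible. The map `φ` fixes `X_a`, commutes with `G`, and preserves asymptotic pairs and
Markov similarity, so `M ↦ M ∘ (φ × φ)` and `V ↦ V ∘ φ` lift invariant Markov cocycles and
invariant interactions from `X_a` to `X`, giving right inverses of the restriction. When `X_a` is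
empty, every cocycle on it is zero.
-/

open scoped Classical

namespace HC

variable {V : Type*} {A : Type*}

section Configurations

variable {S : Subgroup (Equiv.Perm V)} {X Y : Set (V → A)} {g : Equiv.Perm V} {x y : V → A}

@[simp]
lemma confAct_apply (g : Equiv.Perm V) (x : V → A) (v : V) : confAct g x v = x (g⁻¹ v) := rfl

lemma confAct_inv_confAct (g : Equiv.Perm V) (x : V → A) : confAct g⁻¹ (confAct g x) = x := by
  funext v
  simp

lemma InvariantSpace.confAct_mem_iff (hX : InvariantSpace S X) (hg : g ∈ S) :
    confAct g x ∈ X ↔ x ∈ X := by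
  refine ⟨fun h => ?_, fun h => hX g hg ▸ Set.mem_image_of_mem _ h⟩
  rw [← hX g⁻¹ (S.inv_mem hg)]
  exact ⟨_, h, confAct_inv_confAct g x⟩

lemma invariantSpace_iff :
    InvariantSpace S X ↔ ∀ g ∈ S, ∀ x : V → A, confAct g x ∈ X ↔ x ∈ X := by
  refine ⟨fun hX g hg x => hX.confAct_mem_iff hg, fun h g hg => Set.ext fun y => ⟨?_, fun hy => ?_⟩⟩
  · rintro ⟨x, hx, rfl⟩
    exact (h g hg x).2 hx
  · refine ⟨confAct g⁻¹ y, (h g⁻¹ (S.inv_mem hg) y).2 hy, ?_⟩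
    simpa using confAct_inv_confAct g⁻¹ y

lemma InvariantSpace.foldSpace (hX : InvariantSpace S X) (a : A) :
    InvariantSpace S (foldSpace X a) :=
  invariantSpace_iff.2 fun g hg x =>
    and_congr (hX.confAct_mem_iff hg) (g.forall_congr_left (p := fun v => x v ≠ a)).symm

lemma InvariantSpace.siteB_apply_iff (hX : InvariantSpace S X) (hg : g ∈ S) {v : V} {c : A} :
    siteB X (g v) c ↔ siteB X v c := by
  constructor
  · rintro ⟨z, hz, hzc⟩
    exact ⟨confAct g⁻¹ z, (hX.confAct_mem_iff (S.inv_mem hg)).2 hz, by simpa using hzc⟩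
  · rintro ⟨z, hz, hzc⟩
    exact ⟨confAct g z, (hX.confAct_mem_iff hg).2 hz, by simpa using hzc⟩

lemma PreservesAdj.exists_adj_apply_iff {G : SimpleGraph V} (hS : PreservesAdj G S) (hg : g ∈ S)
    {v : V} : (∃ w, G.Adj (g v) w) ↔ ∃ w, G.Adj v w := by
  constructor
  · rintro ⟨w, hw⟩
    exact ⟨g⁻¹ w, (hS g hg v (g⁻¹ w)).1 (by simpa using hw)⟩
  · rintro ⟨w, hw⟩
    exact ⟨g w, (hS g hg v w).2 hw⟩

lemma delta_mono (h : Y ⊆ X) : Delta Y ⊆ Delta X :=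
  fun _ hp => ⟨h hp.1, h hp.2.1, hp.2.2⟩

lemma mem_delta_trans {z : V → A} (hxy : (x, y) ∈ Delta X) (hyz : (y, z) ∈ Delta X) :
    (x, z) ∈ Delta X := by
  refine ⟨hxy.1, hyz.2.1, (hxy.2.2.union hyz.2.2).subset fun v hv => ?_⟩
  by_cases h : x v = y v
  · exact Or.inr fun h' => hv (h.trans h')
  · exact Or.inl h

lemma InvariantSpace.confAct_mem_delta (hX : InvariantSpace S X) (hg : g ∈ S)
    (h : (x, y) ∈ Delta X) : (confAct g x, confAct g y) ∈ Delta X :=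
  ⟨(hX.confAct_mem_iff hg).2 h.1, (hX.confAct_mem_iff hg).2 h.2.1,
    h.2.2.preimage (g⁻¹).injective.injOn⟩

lemma InvariantSpace.confAct_mem_delta_iff (hX : InvariantSpace S X) (hg : g ∈ S) :
    (confAct g x, confAct g y) ∈ Delta X ↔ (x, y) ∈ Delta X := by
  refine ⟨fun h => ?_, hX.confAct_mem_delta hg⟩
  simpa only [confAct_inv_confAct] using hX.confAct_mem_delta (S.inv_mem hg) h

end Configurations

section Restriction

variable {G : SimpleGraph V} {S : Subgroup (Equiv.Perm V)} {X Y : Set (V → A)}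
  {M : (V → A) → (V → A) → ℝ} {x y : V → A}

lemma restrictCocycle_of_mem (h : (x, y) ∈ Delta Y) : restrictCocycle Y M x y = M x y :=
  if_pos h

lemma restrictCocycle_of_notMem (h : (x, y) ∉ Delta Y) : restrictCocycle Y M x y = 0 :=
  if_neg h

lemma restrictCocycle_mem_markovSetInv (hYX : Y ⊆ X) (hY : InvariantSpace S Y)
    (hM : M ∈ markovSetInv G S X) : restrictCocycle Y M ∈ markovSetInv G S Y := by
  obtain ⟨⟨-, hcocycle, hsimilar⟩, hinv⟩ := hM
  refine ⟨⟨fun _ _ h => if_neg h, fun x y z hxy hyz => ?_, fun x y z w hxy hzw h => ?_⟩,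
    fun g hg x y => ?_⟩
  · rw [restrictCocycle_of_mem hxy, restrictCocycle_of_mem hyz,
      restrictCocycle_of_mem (mem_delta_trans hxy hyz)]
    exact hcocycle x y z (delta_mono hYX hxy) (delta_mono hYX hyz)
  · rw [restrictCocycle_of_mem hxy, restrictCocycle_of_mem hzw]
    exact hsimilar x y z w (delta_mono hYX hxy) (delta_mono hYX hzw) h
  · simp only [restrictCocycle, hY.confAct_mem_delta_iff hg, hinv g hg]

lemma restrictCocycle_mem_gibbsSetInv (hYX : Y ⊆ X) (hM : M ∈ gibbsSetInv G S X) :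
    restrictCocycle Y M ∈ gibbsSetInv G S Y := by
  obtain ⟨-, U, hU, hUinv, hMU⟩ := hM
  exact ⟨fun _ _ h => if_neg h, U, hU, hUinv,
    fun x y h => (if_pos h).trans (hMU x y (delta_mono hYX h))⟩

lemma zero_mem_markovSetInv : (0 : (V → A) → (V → A) → ℝ) ∈ markovSetInv G S X :=
  ⟨⟨fun _ _ _ => rfl, fun _ _ _ _ _ => (add_zero 0).symm, fun _ _ _ _ _ _ _ => rfl⟩,
    fun _ _ _ _ => rfl⟩

lemma zero_mem_gibbsSetInv : (0 : (V → A) → (V → A) → ℝ) ∈ gibbsSetInv G S X :=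
  ⟨fun _ _ _ => rfl, 0, fun _ _ _ => rfl, fun _ _ _ _ => rfl, fun _ _ _ => by simp [gibbsSum]⟩

lemma surjOn_restrictCocycle_empty {s t : Set ((V → A) → (V → A) → ℝ)} (hs : 0 ∈ s)
    (ht : ∀ N ∈ t, ∀ x y : V → A, (x, y) ∉ Delta (∅ : Set (V → A)) → N x y = 0) :
    Set.SurjOn (restrictCocycle ∅) s t := by
  refine fun N hN => ⟨0, hs, funext₂ fun x y => ?_⟩
  have h : (x, y) ∉ Delta (∅ : Set (V → A)) := fun h => h.1
  rw [restrictCocycle_of_notMem h, ht N hN x y h]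

end Restriction

section SiteRetraction

variable {G : SimpleGraph V} {S : Subgroup (Equiv.Perm V)} {X Y : Set (V → A)}
  {f : V → A → A} {g : Equiv.Perm V} {x y : V → A}

def siteMap (f : V → A → A) (x : V → A) : V → A :=
  fun v => f v (x v)

lemma mem_delta_siteMap (hf : Set.MapsTo (siteMap f) X Y) (h : (x, y) ∈ Delta X) :
    (siteMap f x, siteMap f y) ∈ Delta Y :=
  ⟨hf h.1, hf h.2.1, h.2.2.subset fun v hv hxy => hv (congrArg (f v) hxy)⟩

lemma markovSimilar_siteMap {z w : V → A} (h : MarkovSimilar G x y z w) (f : V → A → A) :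
    MarkovSimilar G (siteMap f x) (siteMap f y) (siteMap f z) (siteMap f w) := by
  obtain ⟨T, hT, hout, hin⟩ := h
  refine ⟨T, hT, fun u hu => ?_, fun u hu => ?_⟩
  · exact ⟨congrArg (f u) (hout u hu).1, congrArg (f u) (hout u hu).2⟩
  · exact ⟨congrArg (f u) (hin u hu).1, congrArg (f u) (hin u hu).2⟩

lemma siteMap_confAct (h : ∀ v, f (g v) = f v) (x : V → A) :
    siteMap f (confAct g x) = confAct g (siteMap f x) := by
  funext v
  change f v (x (g⁻¹ v)) = f (g⁻¹ v) (x (g⁻¹ v))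
  rw [← h (g⁻¹ v)]
  simp

structure IsSiteRetraction (S : Subgroup (Equiv.Perm V)) (X Y : Set (V → A))
    (f : V → A → A) : Prop where
  subset : Y ⊆ X
  mapsTo : Set.MapsTo (siteMap f) X Y
  siteMap_eq_self : ∀ x ∈ Y, siteMap f x = x
  apply_perm : ∀ g ∈ S, ∀ v, f (g v) = f v

noncomputable def liftCocycle (X : Set (V → A)) (f : V → A → A)
    (N : (V → A) → (V → A) → ℝ) : (V → A) → (V → A) → ℝ :=
  fun x y => if (x, y) ∈ Delta X then N (siteMap f x) (siteMap f y) else 0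

def liftInteraction (f : V → A → A) (U : ∀ F : Set V, (F → A) → ℝ) :
    ∀ F : Set V, (F → A) → ℝ :=
  fun F p => U F fun v => f v (p v)

namespace IsSiteRetraction

variable {N : (V → A) → (V → A) → ℝ}

lemma liftCocycle_mem_markovSetInv (hf : IsSiteRetraction S X Y f) (hX : InvariantSpace S X)
    (hN : N ∈ markovSetInv G S Y) :
    liftCocycle X f N ∈ markovSetInv G S X := by
  obtain ⟨⟨-, hcocycle, hsimilar⟩, hinv⟩ := hN
  have hδ {x y : V → A} (h : (x, y) ∈ Delta X) := mem_delta_siteMap hf.mapsTo h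
  refine ⟨⟨fun _ _ h => if_neg h, fun x y z hxy hyz => ?_, fun x y z w hxy hzw h => ?_⟩,
    fun g hg x y => ?_⟩
  · simp only [liftCocycle, if_pos hxy, if_pos hyz, if_pos (mem_delta_trans hxy hyz)]
    exact hcocycle _ _ _ (hδ hxy) (hδ hyz)
  · simp only [liftCocycle, if_pos hxy, if_pos hzw]
    exact hsimilar _ _ _ _ (hδ hxy) (hδ hzw) (markovSimilar_siteMap h f)
  · simp only [liftCocycle, hX.confAct_mem_delta_iff hg, siteMap_confAct (hf.apply_perm g hg),
      hinv g hg]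

lemma liftCocycle_mem_gibbsSetInv (hf : IsSiteRetraction S X Y f)
    (hN : N ∈ gibbsSetInv G S Y) :
    liftCocycle X f N ∈ gibbsSetInv G S X := by
  obtain ⟨-, U, hU, hUinv, hNU⟩ := hN
  refine ⟨fun _ _ h => if_neg h, liftInteraction f U, fun F hF _ => hU F hF _,
    fun g hg F x => ?_, fun x y h => (if_pos h).trans (hNU _ _ (mem_delta_siteMap hf.mapsTo h))⟩
  change U _ ((⇑g '' F).restrict (siteMap f (confAct g x))) = U F (F.restrict (siteMap f x))
  rw [siteMap_confAct (hf.apply_perm g hg)]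
  exact hUinv g hg F _

lemma restrictCocycle_liftCocycle (hf : IsSiteRetraction S X Y f)
    (hN : ∀ x y, (x, y) ∉ Delta Y → N x y = 0) :
    restrictCocycle Y (liftCocycle X f N) = N := by
  funext x y
  by_cases h : (x, y) ∈ Delta Y
  · rw [restrictCocycle_of_mem h, liftCocycle, if_pos (delta_mono hf.subset h),
      hf.siteMap_eq_self x h.1, hf.siteMap_eq_self y h.2.1]
  · rw [restrictCocycle_of_notMem h, hN x y h]

lemma surjOn_markovSetInv (hf : IsSiteRetraction S X Y f) (hX : InvariantSpace S X) :
    Set.SurjOn (restrictCocycle Y) (markovSetInv G S X) (markovSetInv G S Y) :=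
  fun _ hN => ⟨_, hf.liftCocycle_mem_markovSetInv hX hN, hf.restrictCocycle_liftCocycle hN.1.1⟩

lemma surjOn_gibbsSetInv (hf : IsSiteRetraction S X Y f) :
    Set.SurjOn (restrictCocycle Y) (gibbsSetInv G S X) (gibbsSetInv G S Y) :=
  fun _ hN => ⟨_, hf.liftCocycle_mem_gibbsSetInv hN, hf.restrictCocycle_liftCocycle hN.1⟩

end IsSiteRetraction

end SiteRetraction

section NearestNeighbour

variable {G : SimpleGraph V} {X : Set (V → A)} {x : V → A}

lemma Bipartite.cliqueFree_three (h : Bipartite G) : G.CliqueFree 3 := by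
  obtain ⟨P₁, P₂, -, hdisj, hadj⟩ := h
  exact (SimpleGraph.IsBipartiteWith.isBipartite ⟨hdisj, hadj⟩).cliqueFree (by norm_num)

lemma subset_pair_of_isClique (hG : G.CliqueFree 3) {F : Set V} (hF : G.IsClique F)
    {v w : V} (hv : v ∈ F) (hw : w ∈ F) (hvw : v ≠ w) : F ⊆ {v, w} := by
  intro u hu
  by_contra huvw
  simp only [Set.mem_insert_iff, Set.mem_singleton_iff, not_or] at huvw
  exact hG {u, v, w}
    (SimpleGraph.is3Clique_triple_iff.2 ⟨hF hu hv huvw.1, hF hu hw huvw.2, hF hv hw hvw⟩)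

lemma IsNNConstraint.mem_of_forall_isClique (hX : IsNNConstraint G X)
    (h : ∀ F : Set V, F.Finite → G.IsClique F → ∃ z ∈ X, ∀ v ∈ F, z v = x v) : x ∈ X := by
  obtain ⟨𝓕, rfl⟩ := hX
  intro F hF hcl
  obtain ⟨z, hz, hzx⟩ := h F hF hcl
  have hrestrict : F.restrict z = F.restrict x := funext fun v => hzx v v.2
  exact hrestrict ▸ hz F hF hcl

lemma IsNNConstraint.mem_of_forall_edgeB (hX : IsNNConstraint G X) (hG : G.CliqueFree 3)
    (hne : X.Nonempty) (hsite : ∀ v, siteB X v (x v))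
    (hedge : ∀ v w, G.Adj v w → edgeB X v w (x v) (x w)) : x ∈ X := by
  refine hX.mem_of_forall_isClique fun F _ hF => ?_
  rcases F.eq_empty_or_nonempty with rfl | ⟨v, hv⟩
  · obtain ⟨z, hz⟩ := hne
    exact ⟨z, hz, fun _ h => h.elim⟩
  by_cases hpair : ∃ w ∈ F, w ≠ v
  · obtain ⟨w, hw, hwv⟩ := hpair
    obtain ⟨z, hz, hzv, hzw⟩ := hedge v w (hF hv hw hwv.symm)
    refine ⟨z, hz, fun u hu => ?_⟩
    rcases subset_pair_of_isClique hG hF hv hw hwv.symm hu with rfl | rfl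
    exacts [hzv, hzw]
  · push Not at hpair
    obtain ⟨z, hz, hzv⟩ := hsite v
    exact ⟨z, hz, fun u hu => hpair u hu ▸ hzv⟩

end NearestNeighbour

section Fold

variable {G : SimpleGraph V} {S : Subgroup (Equiv.Perm V)} {X : Set (V → A)} {a b c d : A}
  {v w : V}

lemma edgeB_comm : edgeB X v w c d ↔ edgeB X w v d c :=
  ⟨fun ⟨x, hx, hv, hw⟩ => ⟨x, hx, hw, hv⟩, fun ⟨x, hx, hw, hv⟩ => ⟨x, hx, hv, hw⟩⟩

lemma FoldsInto.edgeB_left (h : FoldsInto G X a b) (hvw : G.Adj v w) (hc : edgeB X v w a c) :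
    edgeB X v w b c :=
  (h.2 v w v hvw hvw.symm c hc).1

lemma FoldsInto.edgeB_replace (h : FoldsInto G X a b) (hvw : G.Adj v w)
    (hcd : edgeB X v w c d) :
    edgeB X v w (if c = a then b else c) (if d = a then b else d) := by
  have replace_left {v w : V} {c d : A} (hvw : G.Adj v w) (hcd : edgeB X v w c d) :
      edgeB X v w (if c = a then b else c) d := by
    split_ifs with hc
    · exact h.edgeB_left hvw (hc ▸ hcd)
    · exact hcd
  exact edgeB_comm.2 (replace_left hvw.symm (edgeB_comm.1 (replace_left hvw hcd)))

/-- At an isolated vertex the fold conditions say nothing about `b`, so there `a` is replaced by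
another symbol occurring at that vertex (one exists whenever the fold is nonempty). -/
noncomputable def foldSymbol (G : SimpleGraph V) (X : Set (V → A)) (a b : A) (v : V) (c : A) :
    A :=
  if c ≠ a then c
  else if ∃ w, G.Adj v w then b
  else if h : ∃ c', c' ≠ a ∧ siteB X v c' then h.choose else b

lemma foldSymbol_of_ne (hc : c ≠ a) : foldSymbol G X a b v c = c :=
  if_pos hc

lemma foldSymbol_of_adj (hvw : G.Adj v w) (c : A) :
    foldSymbol G X a b v c = if c = a then b else c := by
  have hadj : ∃ w, G.Adj v w := ⟨w, hvw⟩
  by_cases hc : c = a <;> simp [foldSymbol, hc, hadj]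

lemma foldSymbol_ne (hab : a ≠ b) (hrep : ∃ c', c' ≠ a ∧ siteB X v c') (c : A) :
    foldSymbol G X a b v c ≠ a := by
  unfold foldSymbol
  split_ifs with hc
  · exact hc
  · exact hab.symm
  · exact hrep.choose_spec.1

lemma FoldsInto.siteB_foldSymbol (h : FoldsInto G X a b) (hrep : ∃ c', c' ≠ a ∧ siteB X v c')
    (hc : siteB X v c) : siteB X v (foldSymbol G X a b v c) := by
  unfold foldSymbol
  split_ifs with hca hadj
  · exact hc
  · obtain ⟨w, hvw⟩ := hadj
    obtain ⟨x, hx, hxv⟩ := hc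
    obtain ⟨z, hz, hzv, -⟩ := h.edgeB_left hvw ⟨x, hx, hxv.trans (not_not.1 hca), rfl⟩
    exact ⟨z, hz, hzv⟩
  · exact hrep.choose_spec.2

lemma foldSymbol_perm (hS : PreservesAdj G S) (hX : InvariantSpace S X) {g : Equiv.Perm V}
    (hg : g ∈ S) (v : V) : foldSymbol G X a b (g v) = foldSymbol G X a b v := by
  funext c
  simp only [foldSymbol, hS.exists_adj_apply_iff hg, hX.siteB_apply_iff hg]

lemma FoldsInto.siteMap_mem (h : FoldsInto G X a b) (hG : G.CliqueFree 3)
    (hX : IsNNConstraint G X) (hrep : ∀ v, ∃ c', c' ≠ a ∧ siteB X v c') {x : V → A}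
    (hx : x ∈ X) : siteMap (foldSymbol G X a b) x ∈ X := by
  refine hX.mem_of_forall_edgeB hG ⟨x, hx⟩
    (fun v => h.siteB_foldSymbol (hrep v) ⟨x, hx, rfl⟩) fun v w hvw => ?_
  simp only [siteMap, foldSymbol_of_adj hvw, foldSymbol_of_adj hvw.symm]
  exact h.edgeB_replace hvw ⟨x, hx, rfl, rfl⟩

lemma FoldsInto.isSiteRetraction (h : FoldsInto G X a b) (hG : G.CliqueFree 3)
    (hS : PreservesAdj G S) (hX : IsNNConstraint G X) (hXinv : InvariantSpace S X)
    (hne : (foldSpace X a).Nonempty) :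
    IsSiteRetraction S X (foldSpace X a) (foldSymbol G X a b) := by
  obtain ⟨x₀, hx₀, hx₀a⟩ := hne
  have hrep : ∀ v, ∃ c', c' ≠ a ∧ siteB X v c' := fun v => ⟨x₀ v, hx₀a v, x₀, hx₀, rfl⟩
  exact ⟨Set.inter_subset_left,
    fun x hx => ⟨h.siteMap_mem hG hX hrep hx, fun v => foldSymbol_ne h.1 (hrep v) _⟩,
    fun x hx => funext fun v => foldSymbol_of_ne (hx.2 v),
    fun g hg => foldSymbol_perm hS hXinv hg⟩

end Fold

theorem statement10_general
    (G : SimpleGraph V) (hbip : Bipartite G)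
    (S : Subgroup (Equiv.Perm V)) (hS : PreservesAdj G S)
    (X Xa : Set (V → A)) (hX : IsNNConstraint G X) (hXinv : InvariantSpace S X)
    (hfold : IsFoldOf G Xa X) :
    (∀ M ∈ markovSetInv G S X, restrictCocycle Xa M ∈ markovSetInv G S Xa) ∧
    (∀ N ∈ markovSetInv G S Xa, ∃ M ∈ markovSetInv G S X, restrictCocycle Xa M = N) ∧
    restrictCocycle Xa '' gibbsSetInv G S X = gibbsSetInv G S Xa := by
  obtain ⟨a, b, hab, rfl⟩ := hfold
  have hsurj :
      Set.SurjOn (restrictCocycle (foldSpace X a)) (markovSetInv G S X)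
          (markovSetInv G S (foldSpace X a)) ∧
        Set.SurjOn (restrictCocycle (foldSpace X a)) (gibbsSetInv G S X)
          (gibbsSetInv G S (foldSpace X a)) := by
    rcases (foldSpace X a).eq_empty_or_nonempty with hempty | hne
    · rw [hempty]
      exact ⟨surjOn_restrictCocycle_empty zero_mem_markovSetInv fun _ hN => hN.1.1,
        surjOn_restrictCocycle_empty zero_mem_gibbsSetInv fun _ hN => hN.1⟩
    · have hφ := hab.isSiteRetraction hbip.cliqueFree_three hS hX hXinv hne
      exact ⟨hφ.surjOn_markovSetInv hXinv, hφ.surjOn_gibbsSetInv⟩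
  refine ⟨fun M hM => restrictCocycle_mem_markovSetInv Set.inter_subset_left
    (hXinv.foldSpace a) hM, fun N hN => hsurj.1 hN, Set.Subset.antisymm ?_ hsurj.2⟩
  exact Set.image_subset_iff.2 fun M hM => restrictCocycle_mem_gibbsSetInv Set.inter_subset_left hM

/-- Restriction of cocycles to a fold `X_a` of `X` is a well-defined
surjection `𝐌^G_X → 𝐌^G_{X_a}` mapping `𝐆^G_X` onto `𝐆^G_{X_a}`. -/
theorem statement10 [Countable V] [Fintype A]
    (G : SimpleGraph V) (hlf : ∀ v : V, (G.neighborSet v).Finite) (hbip : Bipartite G)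
    (S : Subgroup (Equiv.Perm V)) (hS : PreservesAdj G S)
    (X Xa : Set (V → A)) (hX : IsNNConstraint G X) (hXinv : InvariantSpace S X)
    (hfold : IsFoldOf G Xa X) :
    (∀ M ∈ markovSetInv G S X, restrictCocycle Xa M ∈ markovSetInv G S Xa) ∧
    (∀ N ∈ markovSetInv G S Xa, ∃ M ∈ markovSetInv G S X, restrictCocycle Xa M = N) ∧
    restrictCocycle Xa '' gibbsSetInv G S X = gibbsSetInv G S Xa :=
  statement10_general G hbip S hS X Xa hX hXinv hfold

end HC
end
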